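/- arXiv:1309.0949 — 2 statements merged into one kernel-verified Lean document; each statement's English description precedes it below -/
import Mathlib

section
/- For all integers 1 ≤ r ≤ n, the following identity holds in the field of rational functions ℚ(q): q^{r²−r} · ((−q^{n−r+1}; q)_r / (−q; q)_r) · [n−r+1 choose r]_q · C_{n−r}(q) = q^{r²−r} · (1/[n]_q) · [n choose r]_{q²} · [2n−2r choose n−1]_q. -/
/-- The q-integer `[n]_x = 1 + x + ⋯ + x^{n−1}` in `ℚ(q)` (with `[0]_x = 0`). -/
noncomputable def qInt (x : RatFunc ℚ) (n : ℕ) : RatFunc ℚ := ∑ i ∈ Finset.range n, x ^ i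

/-- The q-factorial `[n]_x! = [1]_x[2]_x⋯[n]_x`. -/
noncomputable def qFact (x : RatFunc ℚ) (n : ℕ) : RatFunc ℚ := ∏ i ∈ Finset.range n, qInt x (i + 1)

/-- The Gaussian binomial coefficient `[m choose k]_x = [m]_x!/([k]_x![m−k]_x!)`
for `0 ≤ k ≤ m`, and `0` if `k > m`. -/
noncomputable def qBinom (x : RatFunc ℚ) (m k : ℕ) : RatFunc ℚ :=
  if k ≤ m then qFact x m / (qFact x k * qFact x (m - k)) else 0

/-- The q-Pochhammer symbol `(a; x)_r = (1−a)(1−ax)⋯(1−ax^{r−1})`. -/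
noncomputable def qPoch (x a : RatFunc ℚ) (r : ℕ) : RatFunc ℚ :=
  ∏ i ∈ Finset.range r, (1 - a * x ^ i)

/-- The q-Catalan number `C_n(q) = (1/[n+1]_q)·[2n choose n]_q`. -/
noncomputable def qCatalan (x : RatFunc ℚ) (n : ℕ) : RatFunc ℚ :=
  (1 / qInt x (n + 1)) * qBinom x (2 * n) n

/-! Since `1 - q^{2k} = (1 - q^k)(1 + q^k)`, the factorial `[k]_{q²}!` is `[k]_q! (-q; q)_k` up to
a power of `1 + q`, hence
`[m + r choose r]_{q²} = [m + r choose r]_q (-q^{m+1}; q)_r / (-q; q)_r`.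
This absorbs the Pochhammer quotient, and with `n = m + r` what remains is
`[m + 1 choose r]_q C_m(q) = [m + r choose r]_q [2m choose m + r - 1]_q / [m + r]_q`:
for `r ≤ m + 1` both sides equal `[2m]_q! / ([r]_q! [m + 1 - r]_q! [m]_q!)`, and for
`r > m + 1` both binomials vanish. No denominator vanishes since `q` is not a root of unity. -/

open Finset

lemma Transcendental.not_isOfFinOrder {R A : Type*} [CommRing R] [Nontrivial R] [Ring A]
    [Algebra R A] {x : A} (hx : Transcendental R x) : ¬IsOfFinOrder x := by
  rw [isOfFinOrder_iff_pow_eq_one]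
  rintro ⟨n, hn, hxn⟩
  exact hx ⟨Polynomial.X ^ n - 1, by simpa using Polynomial.X_pow_sub_C_ne_zero hn (1 : R),
    by simp [hxn]⟩

lemma RatFunc.not_isOfFinOrder_X (K : Type*) [Field K] : ¬IsOfFinOrder (X : RatFunc K) :=
  RatFunc.transcendental_X.not_isOfFinOrder

lemma qInt_mul_sub_one (x : RatFunc ℚ) (k : ℕ) : qInt x k * (x - 1) = x ^ k - 1 :=
  geom_sum_mul x k

lemma qInt_ne_zero {x : RatFunc ℚ} (hx : ¬IsOfFinOrder x) {k : ℕ} (hk : k ≠ 0) :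
    qInt x k ≠ 0 := by
  intro h
  have := qInt_mul_sub_one x k
  rw [h, zero_mul, eq_comm, sub_eq_zero] at this
  exact hx (isOfFinOrder_iff_pow_eq_one.2 ⟨k, Nat.pos_of_ne_zero hk, this⟩)

lemma qFact_ne_zero {x : RatFunc ℚ} (hx : ¬IsOfFinOrder x) (k : ℕ) : qFact x k ≠ 0 :=
  prod_ne_zero_iff.2 fun _ _ => qInt_ne_zero hx (Nat.succ_ne_zero _)

lemma qFact_succ (x : RatFunc ℚ) (k : ℕ) : qFact x (k + 1) = qFact x k * qInt x (k + 1) :=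
  prod_range_succ _ _

lemma qBinom_add (x : RatFunc ℚ) (m r : ℕ) :
    qBinom x (m + r) r = qFact x (m + r) / (qFact x r * qFact x m) := by
  rw [qBinom, if_pos (Nat.le_add_left r m), Nat.add_sub_cancel]

lemma qBinom_eq_zero_of_lt (x : RatFunc ℚ) {m k : ℕ} (h : m < k) : qBinom x m k = 0 :=
  if_neg (Nat.not_le.2 h)

lemma one_add_pow_ne_zero {x : RatFunc ℚ} (hx : ¬IsOfFinOrder x) (k : ℕ) :
    1 + x ^ k ≠ 0 := by
  intro h
  rcases Nat.eq_zero_or_pos k with rfl | hk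
  · norm_num at h
  · refine hx (isOfFinOrder_iff_pow_eq_one.2 ⟨2 * k, by omega, ?_⟩)
    rw [pow_mul', eq_neg_of_add_eq_zero_right h]
    norm_num

lemma qPoch_add (x a : RatFunc ℚ) (m r : ℕ) :
    qPoch x a (m + r) = qPoch x a m * qPoch x (a * x ^ m) r := by
  simp only [qPoch, prod_range_add, pow_add, mul_assoc]

lemma qPoch_neg_self_ne_zero {x : RatFunc ℚ} (hx : ¬IsOfFinOrder x) (k : ℕ) :
    qPoch x (-x) k ≠ 0 :=
  prod_ne_zero_iff.2 fun i _ => by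
    simpa [← pow_succ'] using one_add_pow_ne_zero hx (i + 1)

lemma qInt_sq_mul_one_add (x : RatFunc ℚ) (k : ℕ) :
    qInt (x ^ 2) k * (1 + x) = qInt x k * (1 + x ^ k) := by
  induction k with
  | zero => simp [qInt]
  | succ k ih =>
    have := qInt_mul_sub_one x k
    simp only [qInt, sum_range_succ] at *
    linear_combination ih - x ^ k * this

lemma qFact_sq_mul_pow (x : RatFunc ℚ) (k : ℕ) :
    qFact (x ^ 2) k * (1 + x) ^ k = qFact x k * qPoch x (-x) k := by
  rw [pow_eq_prod_const (1 + x), qFact, qFact, qPoch, ← prod_mul_distrib, ← prod_mul_distrib]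
  refine prod_congr rfl fun i _ => ?_
  rw [qInt_sq_mul_one_add]
  ring

lemma qBinom_sq_add {x : RatFunc ℚ} (hx : ¬IsOfFinOrder x) (m r : ℕ) :
    qBinom (x ^ 2) (m + r) r =
      qBinom x (m + r) r * (qPoch x (-x ^ (m + 1)) r / qPoch x (-x) r) := by
  have hc : 1 + x ≠ 0 := by simpa using one_add_pow_ne_zero hx 1
  have hfact (k : ℕ) : qFact (x ^ 2) k = qFact x k * qPoch x (-x) k / (1 + x) ^ k := by
    rw [← qFact_sq_mul_pow, mul_div_cancel_right₀ _ (pow_ne_zero k hc)]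
  have hpoch : qPoch x (-x) (m + r) = qPoch x (-x) m * qPoch x (-x ^ (m + 1)) r := by
    rw [qPoch_add, neg_mul, ← pow_succ']
  rw [qBinom_add, qBinom_add, hfact, hfact, hfact, hpoch]
  have := qFact_ne_zero hx m
  have := qFact_ne_zero hx r
  have := qPoch_neg_self_ne_zero hx m
  have := qPoch_neg_self_ne_zero hx r
  field_simp
  ring

lemma qBinom_mul_qCatalan {x : RatFunc ℚ} (hx : ¬IsOfFinOrder x) {m r : ℕ} (h : r ≤ m + 1) :
    qBinom x (m + 1) r * qCatalan x m =
      qFact x (2 * m) / (qFact x r * qFact x (m + 1 - r) * qFact x m) := by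
  rw [qCatalan, qBinom, if_pos h, two_mul, qBinom_add, qFact_succ]
  have := qFact_ne_zero hx m
  have := qFact_ne_zero hx r
  have := qFact_ne_zero hx (m + 1 - r)
  have := qInt_ne_zero hx (Nat.succ_ne_zero m)
  field_simp

lemma qBinom_mul_qBinom_div_qInt {x : RatFunc ℚ} (hx : ¬IsOfFinOrder x) {m r : ℕ}
    (hr : 1 ≤ r) (h : r ≤ m + 1) :
    qBinom x (m + r) r * qBinom x (2 * m) (m + r - 1) / qInt x (m + r) =
      qFact x (2 * m) / (qFact x r * qFact x (m + 1 - r) * qFact x m) := by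
  obtain ⟨s, rfl⟩ := Nat.exists_eq_add_of_le' hr
  rw [qBinom_add, qBinom, if_pos (by omega), show m + (s + 1) = (m + s) + 1 by ring, qFact_succ,
    show 2 * m - (m + s + 1 - 1) = m + 1 - (s + 1) by omega, Nat.add_sub_cancel]
  have := qFact_ne_zero hx m
  have := qFact_ne_zero hx (m + s)
  have := qFact_ne_zero hx (s + 1)
  have := qFact_ne_zero hx (m + 1 - (s + 1))
  have := qInt_ne_zero hx (Nat.succ_ne_zero (m + s))
  field_simp

/-- For `1 ≤ r ≤ n`, in `ℚ(q)`:
`q^{r²−r}·((−q^{n−r+1};q)_r/(−q;q)_r)·[n−r+1 choose r]_q·C_{n−r}(q)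
 = q^{r²−r}·(1/[n]_q)·[n choose r]_{q²}·[2n−2r choose n−1]_q`. -/
theorem Tr_simplification (n r : ℕ) (hr : 1 ≤ r) (hrn : r ≤ n) :
    RatFunc.X ^ (r ^ 2 - r) *
        (qPoch RatFunc.X (-(RatFunc.X ^ (n - r + 1))) r / qPoch RatFunc.X (-RatFunc.X) r) *
        qBinom RatFunc.X (n - r + 1) r * qCatalan RatFunc.X (n - r) =
      RatFunc.X ^ (r ^ 2 - r) * (1 / qInt RatFunc.X n) *
        qBinom (RatFunc.X ^ 2) n r * qBinom RatFunc.X (2 * n - 2 * r) (n - 1) := by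
  obtain ⟨m, rfl⟩ := Nat.exists_eq_add_of_le' hrn
  have hX := RatFunc.not_isOfFinOrder_X ℚ
  rw [Nat.add_sub_cancel, show 2 * (m + r) - 2 * r = 2 * m by omega, qBinom_sq_add hX]
  rcases le_or_gt r (m + 1) with h | h
  · have hcat := (qBinom_mul_qCatalan hX h).trans (qBinom_mul_qBinom_div_qInt hX hr h).symm
    rw [mul_assoc _ (qBinom _ _ _), hcat]
    ring
  · rw [qBinom_eq_zero_of_lt _ h, qBinom_eq_zero_of_lt _ (by omega : 2 * m < m + r - 1)]
    ring
end

section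
/- For all integers 1 ≤ r ≤ n, the q-integer [n]_q divides the product [n choose r]_{q²} · [2n−2r choose n−1]_q in the polynomial ring ℤ[q]. (Equivalently, T_r(n,q) = q^{r²−r}·(1/[n]_q)·[n choose r]_{q²}·[2n−2r choose n−1]_q is a polynomial in q, answering Andrews' first question.) -/
open Polynomial

/-- The q-integer `[n]_q = 1 + q + ⋯ + q^{n−1}` as a polynomial in `ℤ[q]`
(with `[0]_q = 0`). -/
noncomputable def qIntP (n : ℕ) : Polynomial ℤ := ∑ i ∈ Finset.range n, Polynomial.X ^ i

/-- The q-factorial `[n]_q! = [1]_q[2]_q⋯[n]_q` in `ℤ[q]`. -/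
noncomputable def qFactP (n : ℕ) : Polynomial ℤ := ∏ i ∈ Finset.range n, qIntP (i + 1)

/-- The Gaussian binomial coefficient `[m choose k]_q = [m]_q!/([k]_q![m−k]_q!)`
as a polynomial in `ℤ[q]` (the division, by a monic polynomial, is exact),
and `0` if `k > m`. -/
noncomputable def qBinomP (m k : ℕ) : Polynomial ℤ :=
  if k ≤ m then qFactP m /ₘ (qFactP k * qFactP (m - k)) else 0

/-- The Gaussian binomial coefficient `[m choose k]_{q²}`, i.e. `[m choose k]_q`
with `q` replaced by `q²`. -/
noncomputable def qBinomP2 (m k : ℕ) : Polynomial ℤ := (qBinomP m k).comp (Polynomial.X ^ 2)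

/-!
Over `ℂ` the polynomial `[n]_q` is separable and its roots are the roots of unity `ζ` of
order `d ∣ n`, `d > 1`, so it suffices that one of the two factors vanishes at each such `ζ`.
At a primitive `d`-th root of unity `[m]_q!` vanishes to order exactly `⌊m/d⌋`, so
`[m choose k]_q` vanishes there whenever `⌊k/d⌋ + ⌊(m-k)/d⌋ < ⌊m/d⌋`, in particular when
`d ∣ m` but `d ∤ k`. If the order `e` of `ζ²` does not divide `r`, this applies to
`[n choose r]_{q²}` at `ζ²`. If `e ∣ r`, then `d ∣ 2r`, and it applies to
`[2n - 2r choose n - 1]_q` at `ζ`, since `d ∣ 2n - 2r` while `n - 1 ≡ -1 (mod d)`.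
-/

lemma qIntP_monic {n : ℕ} (hn : n ≠ 0) : (qIntP n).Monic := monic_geom_sum_X hn

lemma qFactP_monic (n : ℕ) : (qFactP n).Monic :=
  monic_prod_of_monic _ _ fun i _ => qIntP_monic i.succ_ne_zero

lemma qFactP_succ (n : ℕ) : qFactP (n + 1) = qFactP n * qIntP (n + 1) :=
  Finset.prod_range_succ _ _

lemma qIntP_add (a b : ℕ) : qIntP (a + b) = qIntP a + X ^ a * qIntP b := by
  simp only [qIntP, Finset.sum_range_add, Finset.mul_sum, pow_add]

-- `[a + b + 2]_q = [a + 1]_q + q^(a+1) [b + 1]_q` splits the step into two smaller cases.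
lemma qFactP_mul_qFactP_dvd (a b : ℕ) : qFactP a * qFactP b ∣ qFactP (a + b) := by
  induction a generalizing b with
  | zero => simp [qFactP]
  | succ a iha =>
    induction b with
    | zero => simp [qFactP]
    | succ b ihb =>
      have hsplit : qFactP (a + 1 + (b + 1)) =
          qFactP (a + (b + 1)) * (qIntP (a + 1) + X ^ (a + 1) * qIntP (b + 1)) := by
        rw [← qIntP_add, show a + 1 + (b + 1) = a + (b + 1) + 1 by omega, qFactP_succ]
      rw [hsplit, mul_add]
      refine dvd_add ?_ ?_
      · rw [qFactP_succ a, mul_right_comm]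
        exact mul_dvd_mul (iha (b + 1)) dvd_rfl
      · rw [qFactP_succ b, ← mul_assoc, mul_left_comm _ (X ^ _),
          show a + (b + 1) = a + 1 + b by omega]
        exact (mul_dvd_mul ihb dvd_rfl).mul_left _

lemma qFactP_mul_qFactP_mul_qBinomP (a b : ℕ) :
    qFactP a * qFactP b * qBinomP (a + b) a = qFactP (a + b) := by
  obtain ⟨c, hc⟩ := qFactP_mul_qFactP_dvd a b
  rw [qBinomP, if_pos (Nat.le_add_right a b), Nat.add_sub_cancel_left, hc,
    mul_divByMonic_cancel_left _ ((qFactP_monic a).mul (qFactP_monic b))]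

lemma div_add_div_lt_add_div_of_dvd {a b d : ℕ} (hab : d ∣ a + b) (ha : ¬ d ∣ a) :
    a / d + b / d < (a + b) / d := by
  have hd : 0 < d := Nat.pos_of_ne_zero <| by
    rintro rfl
    exact ha (by simp_all)
  have hcarry : d ≤ a % d + b % d := by
    have hsum : (a % d + b % d) % d = 0 := by
      rw [← Nat.add_mod]
      exact Nat.mod_eq_zero_of_dvd hab
    have ha' : a % d ≠ 0 := fun h => ha (Nat.dvd_of_mod_eq_zero h)
    by_contra! h
    rw [Nat.mod_eq_of_lt h] at hsum
    omega
  rw [Nat.add_div_eq_of_le_mod_add_mod hcarry hd]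
  omega

section RootsOfUnity

variable {K : Type*} [Field K]

lemma map_qIntP_mul_X_sub_one (n : ℕ) :
    (qIntP n).map (Int.castRingHom K) * (X - 1) = X ^ n - 1 := by
  have h : qIntP n * (X - 1) = X ^ n - 1 := geom_sum_mul X n
  simpa only [Polynomial.map_mul, Polynomial.map_sub, Polynomial.map_pow, map_X,
    Polynomial.map_one] using congrArg (map (Int.castRingHom K)) h

lemma separable_map_qIntP [CharZero K] {n : ℕ} (hn : n ≠ 0) :
    ((qIntP n).map (Int.castRingHom K)).Separable :=
  (separable_X_pow_sub_C (1 : K) (Nat.cast_ne_zero.2 hn) one_ne_zero).of_dvd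
    ⟨X - 1, by rw [map_qIntP_mul_X_sub_one, C_1]⟩

lemma isRoot_map_qIntP_iff {ζ : K} {d : ℕ} (hζ : IsPrimitiveRoot ζ d) (hd : d ≠ 1)
    (j : ℕ) :
    ((qIntP j).map (Int.castRingHom K)).IsRoot ζ ↔ d ∣ j := by
  have hζ1 : ζ - 1 ≠ 0 :=
    sub_ne_zero.2 fun h => hd (hζ.eq_orderOf.trans (orderOf_eq_one_iff.2 h))
  have hgeom := congrArg (eval ζ) (map_qIntP_mul_X_sub_one (K := K) j)
  rw [eval_mul, eval_sub, eval_X, eval_one, eval_sub, eval_pow, eval_X, eval_one] at hgeom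
  rw [IsRoot.def, ← hζ.pow_eq_one_iff_dvd, ← sub_eq_zero (a := ζ ^ j), ← hgeom, mul_eq_zero,
    or_iff_left hζ1]

lemma rootMultiplicity_map_qIntP [CharZero K] {ζ : K} {d j : ℕ} (hζ : IsPrimitiveRoot ζ d)
    (hd : d ≠ 1) (hj : j ≠ 0) :
    rootMultiplicity ζ ((qIntP j).map (Int.castRingHom K)) = if d ∣ j then 1 else 0 := by
  split_ifs with h
  · exact le_antisymm (rootMultiplicity_le_one_of_separable (separable_map_qIntP hj) ζ)
      ((rootMultiplicity_pos ((qIntP_monic hj).map _).ne_zero).2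
        ((isRoot_map_qIntP_iff hζ hd j).2 h))
  · exact rootMultiplicity_eq_zero (mt (isRoot_map_qIntP_iff hζ hd j).1 h)

lemma rootMultiplicity_map_qFactP [CharZero K] {ζ : K} {d : ℕ} (hζ : IsPrimitiveRoot ζ d)
    (hd : d ≠ 1) (m : ℕ) :
    rootMultiplicity ζ ((qFactP m).map (Int.castRingHom K)) = m / d := by
  induction m with
  | zero => simp [qFactP]
  | succ m ih =>
    have hne := ((qFactP_monic m).map (Int.castRingHom K)).mul
      ((qIntP_monic m.succ_ne_zero).map (Int.castRingHom K))
    rw [qFactP_succ, Polynomial.map_mul, rootMultiplicity_mul hne.ne_zero, ih,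
      rootMultiplicity_map_qIntP hζ hd m.succ_ne_zero, Nat.succ_div]

lemma eval_map_qBinomP_eq_zero [CharZero K] {ζ : K} {d m k : ℕ} (hζ : IsPrimitiveRoot ζ d)
    (hkm : k ≤ m) (hm : d ∣ m) (hk : ¬ d ∣ k) :
    ((qBinomP m k).map (Int.castRingHom K)).eval ζ = 0 := by
  obtain ⟨b, rfl⟩ := Nat.exists_eq_add_of_le hkm
  have hd : d ≠ 1 := by
    rintro rfl
    exact hk (one_dvd k)
  have hspec := congrArg (map (Int.castRingHom K)) (qFactP_mul_qFactP_mul_qBinomP k b)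
  rw [Polynomial.map_mul, Polynomial.map_mul] at hspec
  have hprod : (qFactP k).map (Int.castRingHom K) * (qFactP b).map (Int.castRingHom K) *
      (qBinomP (k + b) k).map (Int.castRingHom K) ≠ 0 :=
    hspec ▸ ((qFactP_monic _).map _).ne_zero
  have hmult := congrArg (rootMultiplicity ζ) hspec
  rw [rootMultiplicity_mul hprod,
    rootMultiplicity_mul (((qFactP_monic k).map _).mul ((qFactP_monic b).map _)).ne_zero,
    rootMultiplicity_map_qFactP hζ hd, rootMultiplicity_map_qFactP hζ hd,
    rootMultiplicity_map_qFactP hζ hd] at hmult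
  have hcarry := div_add_div_lt_add_div_of_dvd hm hk
  exact (rootMultiplicity_pos (right_ne_zero_of_mul hprod)).1 (by omega)

lemma eval_map_qBinomP2 (m k : ℕ) (x : K) :
    ((qBinomP2 m k).map (Int.castRingHom K)).eval x =
      ((qBinomP m k).map (Int.castRingHom K)).eval (x ^ 2) := by
  simp [qBinomP2, map_comp, eval_comp]

end RootsOfUnity

lemma Polynomial.Separable.dvd_of_forall_isRoot {K : Type*} [Field K] [IsAlgClosed K]
    {p f : K[X]} (hp : p.Separable) (h : ∀ x, p.IsRoot x → f.IsRoot x) : p ∣ f := by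
  by_cases hf : f = 0
  · exact hf ▸ dvd_zero p
  refine Splits.dvd_of_roots_le_roots (IsAlgClosed.splits p) hp.ne_zero ?_
  rw [Multiset.le_iff_subset (nodup_roots hp)]
  exact fun x hx => (mem_roots hf).2 (h x (isRoot_of_mem_roots hx))

lemma qIntP_dvd_of_forall_isRoot {n : ℕ} (hn : n ≠ 0) {f : ℤ[X]}
    (h : ∀ ζ : ℂ, ((qIntP n).map (Int.castRingHom ℂ)).IsRoot ζ →
      (f.map (Int.castRingHom ℂ)).IsRoot ζ) :
    qIntP n ∣ f :=
  (map_dvd_map _ Int.cast_injective (qIntP_monic hn)).1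
    ((separable_map_qIntP hn).dvd_of_forall_isRoot h)

/-- For `1 ≤ r ≤ n`, the q-integer `[n]_q` divides
`[n choose r]_{q²}·[2n−2r choose n−1]_q` in `ℤ[q]`; equivalently,
`T_r(n,q) = q^{r²−r}·(1/[n]_q)·[n choose r]_{q²}·[2n−2r choose n−1]_q` is a
polynomial in `q` (Andrews' first question). -/
theorem qIntP_dvd_Tr (n r : ℕ) (hr : 1 ≤ r) (hrn : r ≤ n) :
    qIntP n ∣ qBinomP2 n r * qBinomP (2 * n - 2 * r) (n - 1) := by
  have hn : n ≠ 0 := by omega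
  by_cases hk : n - 1 ≤ 2 * n - 2 * r
  swap
  · simp [qBinomP, hk]
  refine qIntP_dvd_of_forall_isRoot hn fun ζ hroot => ?_
  have hd : orderOf ζ ≠ 1 := by
    rw [Ne, orderOf_eq_one_iff]
    rintro rfl
    simp [IsRoot.def, eval_map, qIntP, hn] at hroot
  have hdn : orderOf ζ ∣ n := (isRoot_map_qIntP_iff (IsPrimitiveRoot.orderOf ζ) hd n).1 hroot
  rw [Polynomial.map_mul, IsRoot.def, eval_mul, mul_eq_zero]
  by_cases her : orderOf (ζ ^ 2) ∣ r
  · have hd2r : orderOf ζ ∣ 2 * r := orderOf_dvd_of_pow_eq_one <| by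
      rw [pow_mul, orderOf_dvd_iff_pow_eq_one.1 her]
    have hdn1 : ¬ orderOf ζ ∣ n - 1 := fun h =>
      hd <| Nat.dvd_one.1 <| (Nat.dvd_add_right h).1 <| by rwa [Nat.sub_add_cancel (by omega)]
    exact Or.inr <| eval_map_qBinomP_eq_zero (IsPrimitiveRoot.orderOf ζ) hk
      (Nat.dvd_sub (hdn.mul_left 2) hd2r) hdn1
  · have hen : orderOf (ζ ^ 2) ∣ n := orderOf_dvd_of_pow_eq_one <| by
      rw [← pow_mul, mul_comm, pow_mul, orderOf_dvd_iff_pow_eq_one.1 hdn, one_pow]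
    exact Or.inl <| (eval_map_qBinomP2 n r ζ).trans <|
      eval_map_qBinomP_eq_zero (IsPrimitiveRoot.orderOf (ζ ^ 2)) hrn hen her
end
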